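/- Consider the gradient adaptive laws θ(t+1) = θ(t) − sign(ρ*) Γ s_ζ(t)/m²(t) and ρ(t+1) = ρ(t) − γ s_ξ(t)/m²(t), where s_ζ(t) = ∑ᵢ εᵢ(t) ζᵢ(t), s_ξ(t) = ∑ᵢ εᵢ(t) ξᵢ(t), and the estimation errors satisfy εᵢ(t) = ρ* (θ(t) − θ*)ᵀ ζᵢ(t) + (ρ(t) − ρ*) ξᵢ(t). Let V(t) = |ρ*| (θ(t) − θ*)ᵀ Γ⁻¹ (θ(t) − θ*) + γ⁻¹ (ρ(t) − ρ*)². If γ₁ ∈ (0,2) is the largest eigenvalue of |ρ*| Γ, γ ∈ (0,2), and m(t)² = 1 + ∑ᵢ ζᵢ(t)ᵀ ζᵢ(t) + ∑ᵢ ξᵢ(t)², then V(t+1) − V(t) ≤ −(2 − γ₀) ∑ᵢ εᵢ(t)² / m²(t) ≤ 0, where γ₀ = max{γ₁, γ}. -/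

import Mathlib

/-!
The adaptive step moves `θ̃` along `-Γ s` with `s = ∑ εᵢ ζᵢ`, so in the `Γ⁻¹`-metric the cross
term is `-2 sign(ρ*) θ̃ᵀ s / m²` and the quadratic term is `sᵀ Γ s / m⁴`; likewise for `ρ̃`.
Weighting by `|ρ*|` and `γ⁻¹`, the cross terms add up to `-2 (ρ* θ̃ᵀ s + ρ̃ ∑ εᵢ ξᵢ) / m²`,
which is exactly `-2 ∑ εᵢ² / m²` by the definition of `εᵢ`. The quadratic terms are at most
`γ₀ (‖s‖² + (∑ εᵢ ξᵢ)²) / m⁴`, and Cauchy–Schwarz bounds this by `γ₀ ∑ εᵢ² / m²` because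
`m²` dominates `∑ ‖ζᵢ‖² + ∑ ξᵢ²`.
-/

open scoped Matrix

theorem Real.abs_mul_sign (r : ℝ) : |r| * Real.sign r = r := by
  rcases lt_trichotomy r 0 with h | rfl | h
  · rw [Real.sign_of_neg h, abs_of_neg h]; ring
  · simp
  · rw [Real.sign_of_pos h, abs_of_pos h]; ring

theorem Real.sign_sq_of_ne_zero {r : ℝ} (hr : r ≠ 0) : Real.sign r ^ 2 = 1 := by
  rcases Real.sign_apply_eq_of_ne_zero r hr with h | h <;> simp [h]

namespace Matrix

variable {ι R : Type*} [Fintype ι] [CommRing R]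

theorem IsSymm.dotProduct_mulVec_comm {A : Matrix ι ι R} (hA : A.IsSymm) (x y : ι → R) :
    x ⬝ᵥ A *ᵥ y = y ⬝ᵥ A *ᵥ x := by
  rw [dotProduct_mulVec, ← mulVec_transpose, hA.eq, dotProduct_comm]

theorem dotProduct_inv_mulVec_sub_smul_mulVec [DecidableEq ι] {Γ : Matrix ι ι R}
    (hΓ : Γ.IsSymm) (hdet : IsUnit Γ.det) (a s : ι → R) (c : R) :
    (a - c • Γ *ᵥ s) ⬝ᵥ Γ⁻¹ *ᵥ (a - c • Γ *ᵥ s) =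
      a ⬝ᵥ Γ⁻¹ *ᵥ a - 2 * c * (a ⬝ᵥ s) + c ^ 2 * (s ⬝ᵥ Γ *ᵥ s) := by
  have hcancel : Γ⁻¹ *ᵥ (Γ *ᵥ s) = s := by
    rw [mulVec_mulVec, nonsing_inv_mul Γ hdet, one_mulVec]
  have hcross : (Γ *ᵥ s) ⬝ᵥ Γ⁻¹ *ᵥ a = a ⬝ᵥ s := by
    rw [(hΓ.inv).dotProduct_mulVec_comm, hcancel]
  simp only [sub_dotProduct, dotProduct_sub, mulVec_sub, mulVec_smul, smul_dotProduct,
    dotProduct_smul, smul_eq_mul, hcancel, hcross, dotProduct_comm (Γ *ᵥ s) s]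
  ring

end Matrix

theorem sum_smul_dotProduct_self_le {ι κ : Type*} [Fintype ι] [Fintype κ]
    (ε : ι → ℝ) (ζ : ι → κ → ℝ) :
    (∑ i, ε i • ζ i) ⬝ᵥ (∑ i, ε i • ζ i) ≤ (∑ i, ε i ^ 2) * ∑ i, ζ i ⬝ᵥ ζ i := by
  calc (∑ i, ε i • ζ i) ⬝ᵥ (∑ i, ε i • ζ i) = ∑ j, (∑ i, ε i * ζ i j) ^ 2 := by
        simp only [dotProduct, Finset.sum_apply, Pi.smul_apply, smul_eq_mul, sq]
    _ ≤ ∑ j, (∑ i, ε i ^ 2) * ∑ i, ζ i j ^ 2 :=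
        Finset.sum_le_sum fun j _ => Finset.sum_mul_sq_le_sq_mul_sq _ _ _
    _ = (∑ i, ε i ^ 2) * ∑ i, ζ i ⬝ᵥ ζ i := by
        rw [← Finset.mul_sum, Finset.sum_comm]
        simp only [dotProduct, sq]

theorem quadForm_add_sq_le_of_le_max {ι κ : Type*} [Fintype ι] [Fintype κ]
    {Γ : Matrix κ κ ℝ} {c γ γ1 γ0 : ℝ} (hΓ : ∀ v, v ⬝ᵥ (c • Γ) *ᵥ v ≤ γ1 * (v ⬝ᵥ v))
    (hγ1 : γ1 ≤ γ0) (hγ : γ ≤ γ0) (hγ0 : 0 ≤ γ0) (ε ξ : ι → ℝ) (ζ : ι → κ → ℝ) :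
    c * ((∑ i, ε i • ζ i) ⬝ᵥ Γ *ᵥ ∑ i, ε i • ζ i) + γ * (∑ i, ε i * ξ i) ^ 2 ≤
      γ0 * (∑ i, ε i ^ 2) * (∑ i, ζ i ⬝ᵥ ζ i + ∑ i, ξ i ^ 2) := calc
  _ ≤ γ1 * ((∑ i, ε i • ζ i) ⬝ᵥ ∑ i, ε i • ζ i) + γ * (∑ i, ε i * ξ i) ^ 2 := by
    simpa only [Matrix.smul_mulVec, dotProduct_smul, smul_eq_mul, add_le_add_iff_right]
      using hΓ (∑ i, ε i • ζ i)
  _ ≤ γ0 * ((∑ i, ε i • ζ i) ⬝ᵥ ∑ i, ε i • ζ i) + γ0 * (∑ i, ε i * ξ i) ^ 2 := by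
    gcongr
    exact Fintype.sum_nonneg fun _ => mul_self_nonneg _
  _ ≤ γ0 * ((∑ i, ε i ^ 2) * ∑ i, ζ i ⬝ᵥ ζ i) + γ0 * ((∑ i, ε i ^ 2) * ∑ i, ξ i ^ 2) := by
    gcongr
    · exact sum_smul_dotProduct_self_le ε ζ
    · exact Finset.sum_mul_sq_le_sq_mul_sq _ _ _
  _ = γ0 * (∑ i, ε i ^ 2) * (∑ i, ζ i ⬝ᵥ ζ i + ∑ i, ξ i ^ 2) := by ring

theorem dotProduct_sum_smul_add_sum_mul_eq_sum_sq {ι κ : Type*} [Fintype ι] [Fintype κ]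
    {R : Type*} [CommRing R] {a b : R} {e : κ → R} {ζ : ι → κ → R} {ξ ε : ι → R}
    (hε : ∀ i, ε i = a * (e ⬝ᵥ ζ i) + b * ξ i) :
    a * (e ⬝ᵥ ∑ i, ε i • ζ i) + b * ∑ i, ε i * ξ i = ∑ i, ε i ^ 2 := by
  simp only [dotProduct_sum, dotProduct_smul, smul_eq_mul, Finset.mul_sum,
    ← Finset.sum_add_distrib]
  refine Finset.sum_congr rfl fun i _ => ?_
  linear_combination (-ε i) * hε i

theorem lyapunov_increment_eq {ι : Type*} [Fintype ι] [DecidableEq ι]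
    {Γ : Matrix ι ι ℝ} (hΓ : Γ.IsSymm) (hdet : IsUnit Γ.det) {ρs γ : ℝ} (hρs : ρs ≠ 0)
    (hγ : γ ≠ 0) (M : ℝ) (e s : ι → ℝ) (r S : ℝ) :
    (|ρs| * ((e - (Real.sign ρs / M) • Γ *ᵥ s) ⬝ᵥ Γ⁻¹ *ᵥ (e - (Real.sign ρs / M) • Γ *ᵥ s))
        + γ⁻¹ * (r - γ * S / M) ^ 2)
      - (|ρs| * (e ⬝ᵥ Γ⁻¹ *ᵥ e) + γ⁻¹ * r ^ 2)
      = -2 * (ρs * (e ⬝ᵥ s) + r * S) / M + (|ρs| * (s ⬝ᵥ Γ *ᵥ s) + γ * S ^ 2) / M ^ 2 := by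
  rw [Matrix.dotProduct_inv_mulVec_sub_smul_mulVec hΓ hdet]
  linear_combination (-2 * (e ⬝ᵥ s) / M) * Real.abs_mul_sign ρs
    + (|ρs| * (s ⬝ᵥ Γ *ᵥ s) / M ^ 2) * Real.sign_sq_of_ne_zero hρs
    + (-2 * r * S / M + γ * S ^ 2 / M ^ 2) * mul_inv_cancel₀ hγ

theorem direct_adaptive_law_V_decrease_general
    (n : ℕ) (ρs : ℝ) (hρs : ρs ≠ 0)
    (θ : ℕ → Fin (n + 1) → ℝ) (θs : Fin (n + 1) → ℝ) (ρ : ℕ → ℝ)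
    (Γ : Matrix (Fin (n + 1)) (Fin (n + 1)) ℝ)
    (hΓpd : Γ.PosDef)
    (γ γ1 : ℝ) (hγ : γ ∈ Set.Ioo (0 : ℝ) 2) (hγ1 : γ1 ∈ Set.Ioo (0 : ℝ) 2)
    (hγ1max : ∀ v : Fin (n + 1) → ℝ, v ⬝ᵥ (|ρs| • Γ).mulVec v ≤ γ1 * (v ⬝ᵥ v))
    (ζ : ℕ → Fin n → Fin (n + 1) → ℝ) (ξ ε : ℕ → Fin n → ℝ) (m : ℕ → ℝ)
    (hm : ∀ t, m t = Real.sqrt (1 + ∑ i, ζ t i ⬝ᵥ ζ t i + ∑ i, (ξ t i) ^ 2))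
    (hε : ∀ t i, ε t i = ρs * ((θ t - θs) ⬝ᵥ ζ t i) + (ρ t - ρs) * ξ t i)
    (hθ : ∀ t, θ (t + 1) =
      θ t - (Real.sign ρs / m t ^ 2) • Γ.mulVec (∑ i, ε t i • ζ t i))
    (hρ : ∀ t, ρ (t + 1) = ρ t - γ * (∑ i, ε t i * ξ t i) / m t ^ 2)
    (V : ℕ → ℝ)
    (hV : ∀ t, V t =
      |ρs| * ((θ t - θs) ⬝ᵥ Γ⁻¹.mulVec (θ t - θs)) + γ⁻¹ * (ρ t - ρs) ^ 2)
    (γ0 : ℝ) (hγ0 : γ0 = max γ1 γ) :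
    ∀ t, V (t + 1) - V t ≤ -(2 - γ0) * (∑ i, (ε t i) ^ 2) / m t ^ 2 ∧
      -(2 - γ0) * (∑ i, (ε t i) ^ 2) / m t ^ 2 ≤ 0 := by
  intro t
  set s := ∑ i, ε t i • ζ t i
  set S := ∑ i, ε t i * ξ t i
  set E := ∑ i, ε t i ^ 2
  have hζ : 0 ≤ ∑ i, ζ t i ⬝ᵥ ζ t i :=
    Finset.sum_nonneg fun i _ => Fintype.sum_nonneg fun _ => mul_self_nonneg _
  have hM : m t ^ 2 = 1 + (∑ i, ζ t i ⬝ᵥ ζ t i + ∑ i, ξ t i ^ 2) := by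
    rw [hm t, Real.sq_sqrt (by positivity), add_assoc]
  have hMpos : 0 < m t ^ 2 := by rw [hM]; positivity
  have hγ0nonneg : 0 ≤ γ0 := hγ0 ▸ hγ.1.le.trans (le_max_right γ1 γ)
  have hE : 0 ≤ E := Finset.sum_nonneg fun i _ => sq_nonneg (ε t i)
  have hΔ : V (t + 1) - V t = -2 * E / m t ^ 2 +
      (|ρs| * (s ⬝ᵥ Γ *ᵥ s) + γ * S ^ 2) / (m t ^ 2) ^ 2 := by
    rw [hV, hV, hθ, hρ, sub_right_comm (θ t), sub_right_comm (ρ t),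
      lyapunov_increment_eq (Matrix.isHermitian_iff_isSymm.1 hΓpd.1)
        (isUnit_iff_ne_zero.2 hΓpd.det_pos.ne') hρs hγ.1.ne',
      dotProduct_sum_smul_add_sum_mul_eq_sum_sq (hε t)]
  have hquad := quadForm_add_sq_le_of_le_max hγ1max (hγ0 ▸ le_max_left γ1 γ)
    (hγ0 ▸ le_max_right γ1 γ) hγ0nonneg (ε t) (ξ t) (ζ t)
  have hγ0lt : γ0 < 2 := hγ0 ▸ max_lt hγ1.2 hγ.2
  refine ⟨?_, div_nonpos_of_nonpos_of_nonneg (by nlinarith) hMpos.le⟩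
  calc V (t + 1) - V t
      ≤ -2 * E / m t ^ 2 + γ0 * E * m t ^ 2 / (m t ^ 2) ^ 2 := by
        rw [hΔ, hM]
        gcongr
        exact hquad.trans (by nlinarith [mul_nonneg hγ0nonneg hE])
    _ = -(2 - γ0) * E / m t ^ 2 := by field_simp; ring

theorem direct_adaptive_law_V_decrease
    (n : ℕ) (ρs : ℝ) (hρs : ρs ≠ 0)
    (θ : ℕ → Fin (n + 1) → ℝ) (θs : Fin (n + 1) → ℝ) (ρ : ℕ → ℝ)
    (Γ : Matrix (Fin (n + 1)) (Fin (n + 1)) ℝ)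
    (hΓsym : Γ.IsSymm) (hΓpd : Γ.PosDef)
    (γ γ1 : ℝ) (hγ : γ ∈ Set.Ioo (0 : ℝ) 2) (hγ1 : γ1 ∈ Set.Ioo (0 : ℝ) 2)
    (hγ1max : ∀ v : Fin (n + 1) → ℝ, v ⬝ᵥ (|ρs| • Γ).mulVec v ≤ γ1 * (v ⬝ᵥ v))
    (ζ : ℕ → Fin n → Fin (n + 1) → ℝ) (ξ ε : ℕ → Fin n → ℝ) (m : ℕ → ℝ)
    (hm : ∀ t, m t = Real.sqrt (1 + ∑ i, ζ t i ⬝ᵥ ζ t i + ∑ i, (ξ t i) ^ 2))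
    (hε : ∀ t i, ε t i = ρs * ((θ t - θs) ⬝ᵥ ζ t i) + (ρ t - ρs) * ξ t i)
    (hθ : ∀ t, θ (t + 1) =
      θ t - (Real.sign ρs / m t ^ 2) • Γ.mulVec (∑ i, ε t i • ζ t i))
    (hρ : ∀ t, ρ (t + 1) = ρ t - γ * (∑ i, ε t i * ξ t i) / m t ^ 2)
    (V : ℕ → ℝ)
    (hV : ∀ t, V t =
      |ρs| * ((θ t - θs) ⬝ᵥ Γ⁻¹.mulVec (θ t - θs)) + γ⁻¹ * (ρ t - ρs) ^ 2)
    (γ0 : ℝ) (hγ0 : γ0 = max γ1 γ) :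
    ∀ t, V (t + 1) - V t ≤ -(2 - γ0) * (∑ i, (ε t i) ^ 2) / m t ^ 2 ∧
      -(2 - γ0) * (∑ i, (ε t i) ^ 2) / m t ^ 2 ≤ 0 :=
  direct_adaptive_law_V_decrease_general n ρs hρs θ θs ρ Γ hΓpd γ γ1 hγ hγ1 hγ1max ζ ξ ε m hm hε hθ
    hρ V hV γ0 hγ0
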